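/- If A ⊆ 2^ω is E_0-independent and has the Baire property, then A is meager; hence the Baire-measurable chromatic number of E_0 is uncountable: 2^ω is not the union of countably many Baire-measurable E_0-independent sets. -/

import Mathlib

/-!
A Baire-measurable set `A` agrees with an open set `u` up to a meagre set. If `u` contained a
point `x₀`, it would also contain `flipBit n x₀` for large `n`, since flipping a late bit moves a
point only slightly. Flipping a bit is a homeomorphism, so `A ∩ (flipBit n)⁻¹ A` agrees with the
nonempty open set `u ∩ (flipBit n)⁻¹ u` up to a meagre set and is therefore nonempty by the Baire
category theorem; any `x` in it gives two distinct `E₀`-related points `x`, `flipBit n x` of `A`.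
So `u = ∅` and `A` is meagre; a countable union of meagre sets is meagre, and Cantor space is not.
-/

/-- The relation `E₀` on Cantor space `2^ω`: eventual agreement. -/
def E0 (x y : ℕ → Bool) : Prop := {n : ℕ | x n ≠ y n}.Finite

/-- A set `A ⊆ 2^ω` is `E₀`-independent if no two distinct elements of `A`
are `E₀`-related. -/
def E0Independent (A : Set (ℕ → Bool)) : Prop :=
  ∀ x ∈ A, ∀ y ∈ A, x ≠ y → ¬ E0 x y

open Filter Topology

section Baire

variable {X : Type*} [TopologicalSpace X]

theorem isMeagre_iff_residualEq_empty {s : Set X} : IsMeagre s ↔ s =ᵇ (∅ : Set X) :=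
  eventuallyEq_empty.symm

theorem Filter.EventuallyEq.nonempty_of_isOpen [BaireSpace X] {s u : Set X} (h : s =ᵇ u)
    (hu : IsOpen u) (hne : u.Nonempty) : s.Nonempty := by
  obtain ⟨x, hxu, hx⟩ := (dense_of_mem_residual h).inter_open_nonempty u hu hne
  exact ⟨x, (eq_iff_iff.mp hx).mpr hxu⟩

theorem exists_mem_map_mem_of_residualEq [BaireSpace X] {A u : Set X} (hu : IsOpen u)
    (hAu : A =ᵇ u) (φ : X ≃ₜ X) (hne : (u ∩ φ ⁻¹' u).Nonempty) : ∃ x ∈ A, φ x ∈ A := by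
  have hφ : φ ⁻¹' A =ᵇ φ ⁻¹' u :=
    hAu.comp_tendsto (tendsto_residual_of_isOpenMap φ.continuous φ.isOpenMap)
  exact (hAu.inter hφ).nonempty_of_isOpen (hu.inter (hu.preimage φ.continuous)) hne

end Baire

def flipBit (n : ℕ) : (ℕ → Bool) ≃ₜ (ℕ → Bool) :=
  Homeomorph.piCongrRight fun i =>
    if i = n then Equiv.boolNot.toHomeomorphOfDiscrete else Homeomorph.refl Bool

theorem flipBit_apply (n : ℕ) (x : ℕ → Bool) (i : ℕ) :
    flipBit n x i = if i = n then !x i else x i := by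
  simp only [flipBit, Homeomorph.piCongrRight_apply]
  split_ifs <;> rfl

theorem flipBit_ne (n : ℕ) (x : ℕ → Bool) : flipBit n x ≠ x :=
  fun h => by simpa [flipBit_apply] using congr_fun h n

theorem E0_flipBit (n : ℕ) (x : ℕ → Bool) : E0 (flipBit n x) x :=
  (Set.finite_singleton n).subset fun i hi => by
    by_contra hin
    simp [flipBit_apply, hin] at hi

theorem tendsto_flipBit_atTop (x : ℕ → Bool) : Tendsto (fun n => flipBit n x) atTop (𝓝 x) := by
  refine tendsto_pi_nhds.2 fun i => tendsto_const_nhds.congr' ?_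
  filter_upwards [eventually_gt_atTop i] with n hn
  simp [flipBit_apply, hn.ne]

theorem E0Independent.eq_empty_of_residualEq {A u : Set (ℕ → Bool)} (hA : E0Independent A)
    (hu : IsOpen u) (hAu : A =ᵇ u) : u = ∅ := by
  by_contra! ⟨x₀, hx₀⟩
  obtain ⟨n, hn⟩ := ((tendsto_flipBit_atTop x₀).eventually (hu.mem_nhds hx₀)).exists
  obtain ⟨x, hxA, hflipA⟩ := exists_mem_map_mem_of_residualEq hu hAu (flipBit n) ⟨x₀, hx₀, hn⟩
  exact hA _ hflipA x hxA (flipBit_ne n x) (E0_flipBit n x)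

theorem E0Independent.isMeagre {A : Set (ℕ → Bool)} (hA : E0Independent A)
    (hBM : BaireMeasurableSet A) : IsMeagre A := by
  obtain ⟨u, hu, hAu⟩ := hBM.residualEq_isOpen
  rw [isMeagre_iff_residualEq_empty, ← hA.eq_empty_of_residualEq hu hAu]
  exact hAu

/-- Baire-measurable `E₀`-independent sets are meager; hence Cantor space is
not the union of countably many Baire-measurable `E₀`-independent sets, so the
Baire-measurable chromatic number of `E₀` is uncountable. -/
theorem E0_Baire_chromatic_uncountable :
    (∀ A : Set (ℕ → Bool), BaireMeasurableSet A → E0Independent A → IsMeagre A) ∧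
    ¬ ∃ A : ℕ → Set (ℕ → Bool),
        (∀ n, BaireMeasurableSet (A n) ∧ E0Independent (A n)) ∧
        (⋃ n, A n) = Set.univ := by
  refine ⟨fun A hBM hA => hA.isMeagre hBM, ?_⟩
  rintro ⟨A, hA, hcover⟩
  have hmeagre : IsMeagre (⋃ n, A n) := isMeagre_iUnion fun n => (hA n).2.isMeagre (hA n).1
  rw [hcover] at hmeagre
  exact not_isMeagre_of_isOpen isOpen_univ Set.univ_nonempty hmeagre
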